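/- arXiv:math/0507511 — 3 statements merged into one kernel-verified Lean document; each statement's English description precedes it below -/
import Mathlib

section
/- For every prime p > 3: ∑_{j=1}^{p-1} 1/[j]_q² ≡ -((p-1)(p-5)/12)(1-q)² (mod [p]_q), in the localization of ℚ[q] at [p]_q. -/
open Polynomial Finset

/-- `[n]_q = 1 + q + ⋯ + q^(n-1)` as a polynomial in `ℚ[q]`. -/
noncomputable def qnum (n : ℕ) : ℚ[X] := ∑ i ∈ Finset.range n, X ^ i

/-- The embedding of `ℚ[q]` into the field of rational functions `ℚ(q)`. -/
noncomputable def Φ : ℚ[X] →+* RatFunc ℚ := algebraMap _ _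

/-- `ModPow p k x` says that `x` lies in the ideal generated by `[p]_q ^ k` in the
localization of `ℚ[q]` at the polynomials coprime to the irreducible polynomial
`[p]_q`: that is, `x = [p]_q ^ k · a / b` with `[p]_q ∤ b`. -/
def ModPow (p k : ℕ) (x : RatFunc ℚ) : Prop :=
  ∃ a b : ℚ[X], ¬ (qnum p ∣ b) ∧ x * Φ b = Φ (qnum p ^ k * a)

/-!
Since `[p]_q` is the `p`-th cyclotomic polynomial, the minimal polynomial over `ℚ` of a primitive
`p`-th root of unity `ζ`, a rational function is `≡ 0 (mod [p]_q)` exactly when it is regular at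
`ζ` with value `0` there; so the congruence is an identity between values at `ζ`.
There `1 / [j]_ζ = (ζ - 1) / (ζ ^ j - 1)`, and for `ω ^ p = 1 ≠ ω` one has the finite Fourier
expansion `1 / (ω - 1) = (1 / p) ∑_{k<p} k ω ^ k`. Summing the squares over `ω = ζ ^ j` and using
orthogonality of characters gives `∑_{j=1}^{p-1} 1 / (ζ ^ j - 1) ^ 2 = -(p - 1)(p - 5) / 12`.
-/

section RegularValue

variable {F L : Type*} [Field F] [Field L] [Algebra F L]

def HasValueAt (ζ : L) (x : RatFunc F) (v : L) : Prop :=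
  ∃ a b : F[X], aeval ζ b ≠ 0 ∧ x * algebraMap F[X] (RatFunc F) b = algebraMap F[X] (RatFunc F) a ∧
    aeval ζ a = v * aeval ζ b

variable {ζ : L} {x y : RatFunc F} {v w : L}

theorem hasValueAt_algebraMap (ζ : L) (f : F[X]) :
    HasValueAt ζ (algebraMap F[X] (RatFunc F) f) (aeval ζ f) :=
  ⟨f, 1, by simp, by simp, by simp⟩

namespace HasValueAt

theorem add (hx : HasValueAt ζ x v) (hy : HasValueAt ζ y w) : HasValueAt ζ (x + y) (v + w) := by
  obtain ⟨a, b, hb, hxab, hab⟩ := hx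
  obtain ⟨c, d, hd, hycd, hcd⟩ := hy
  refine ⟨a * d + c * b, b * d, by simp [hb, hd], ?_, ?_⟩
  · simp only [map_add, map_mul, ← hxab, ← hycd]
    ring
  · simp only [map_add, map_mul, hab, hcd]
    ring

theorem mul (hx : HasValueAt ζ x v) (hy : HasValueAt ζ y w) : HasValueAt ζ (x * y) (v * w) := by
  obtain ⟨a, b, hb, hxab, hab⟩ := hx
  obtain ⟨c, d, hd, hycd, hcd⟩ := hy
  refine ⟨a * c, b * d, by simp [hb, hd], ?_, ?_⟩
  · simp only [map_mul, ← hxab, ← hycd]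
    ring
  · simp only [map_mul, hab, hcd]
    ring

theorem pow (hx : HasValueAt ζ x v) (n : ℕ) : HasValueAt ζ (x ^ n) (v ^ n) := by
  induction n with
  | zero => simpa using hasValueAt_algebraMap (F := F) ζ 1
  | succ n ih => simpa only [pow_succ] using ih.mul hx

theorem inv (hx : HasValueAt ζ x v) (hv : v ≠ 0) : HasValueAt ζ x⁻¹ v⁻¹ := by
  obtain ⟨a, b, hb, hxab, hab⟩ := hx
  have ha : aeval ζ a ≠ 0 := by simp [hab, hv, hb]
  have ha' : algebraMap F[X] (RatFunc F) a ≠ 0 :=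
    (map_ne_zero_iff _ (IsFractionRing.injective _ _)).2 fun h => ha (by simp [h])
  refine ⟨b, a, ha, ?_, ?_⟩
  · have hx0 : x ≠ 0 := by rintro rfl; exact ha' (by simpa using hxab.symm)
    rw [← hxab]
    field_simp
  · rw [hab]
    field_simp

theorem sum {ι : Type*} {s : Finset ι} {f : ι → RatFunc F} {g : ι → L}
    (h : ∀ i ∈ s, HasValueAt ζ (f i) (g i)) : HasValueAt ζ (∑ i ∈ s, f i) (∑ i ∈ s, g i) := by
  classical
  induction s using Finset.induction_on with
  | empty => simpa using hasValueAt_algebraMap (F := F) ζ 0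
  | insert i s hi ih =>
    rw [sum_insert hi, sum_insert hi]
    exact (h i (mem_insert_self i s)).add (ih fun j hj => h j (mem_insert_of_mem hj))

end HasValueAt

end RegularValue

theorem modPow_one_of_hasValueAt_zero {L : Type*} [Field L] [Algebra ℚ L] {ζ : L} {p : ℕ}
    (hmin : minpoly ℚ ζ = qnum p) {x : RatFunc ℚ} (hx : HasValueAt ζ x 0) : ModPow p 1 x := by
  obtain ⟨a, b, hb, hxab, ha⟩ := hx
  rw [zero_mul] at ha
  obtain ⟨c, rfl⟩ : qnum p ∣ a := hmin ▸ minpoly.dvd ℚ ζ ha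
  refine ⟨c, b, fun hdvd => hb ?_, by rwa [pow_one]⟩
  obtain ⟨d, rfl⟩ := hmin ▸ hdvd
  simp [minpoly.aeval]

theorem sub_one_mul_sum_range_mul_pow {R : Type*} [CommRing R] (x : R) (n : ℕ) :
    (x - 1) * ∑ k ∈ range n, (k : R) * x ^ k
      = ((n : R) - 1) * x ^ n - ∑ k ∈ range n, x ^ k + 1 := by
  induction n with
  | zero => simp
  | succ n ih =>
    rw [sum_range_succ, sum_range_succ, mul_add, ih]
    push_cast
    ring

theorem sum_range_mul_sub_mul_six (n : ℕ) :
    (∑ k ∈ range n, k * (n - k)) * 6 = (n - 1) * n * (n + 1) := by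
  induction n with
  | zero => simp
  | succ n ih =>
    have hstep : ∑ k ∈ range (n + 1), k * (n + 1 - k) = ∑ k ∈ range (n + 1), (k * (n - k) + k) :=
      sum_congr rfl fun k hk => by
        rw [Nat.sub_add_comm (Nat.le_of_lt_succ (mem_range.1 hk)), mul_add_one]
    rw [hstep, sum_add_distrib, sum_range_succ, Nat.sub_self, mul_zero, add_zero, add_mul, ih,
      show (∑ k ∈ range (n + 1), k) * 6 = (∑ k ∈ range (n + 1), k) * 2 * 3 by ring,
      sum_range_id_mul_two]
    rcases n with _ | n
    · rfl
    · simp only [Nat.add_sub_cancel]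
      ring

theorem sum_range_ite_dvd_add_mul {n k : ℕ} (hk : k < n) :
    ∑ l ∈ range n, (if n ∣ k + l then k * l else 0) = k * (n - k) := by
  rw [sum_eq_single (n - k), if_pos (by rw [Nat.add_sub_cancel' hk.le])]
  · intro l hl hlk
    split_ifs with hdvd
    · obtain ⟨c, hc⟩ := hdvd
      have hl' := mem_range.1 hl
      rcases c with _ | _ | c
      · rw [mul_zero, Nat.add_eq_zero_iff] at hc
        rw [hc.1, zero_mul]
      · omega
      · nlinarith
    · rfl
  · intro hnk
    rw [show k = 0 by simp at hnk; omega, zero_add, zero_mul, ite_self]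

section RootOfUnity

variable {K : Type*} [Field K] {n : ℕ}

theorem sub_one_mul_sum_range_mul_pow_of_pow_eq_one {ω : K} (hω : ω ^ n = 1) (h1 : ω ≠ 1) :
    (ω - 1) * ∑ k ∈ range n, (k : K) * ω ^ k = n := by
  rw [sub_one_mul_sum_range_mul_pow, hω, geom_sum_eq h1, hω]
  ring

variable {ζ : K}

namespace IsPrimitiveRoot

theorem sum_range_pow_pow (hζ : IsPrimitiveRoot ζ n) (m : ℕ) :
    ∑ j ∈ range n, (ζ ^ m) ^ j = if n ∣ m then (n : K) else 0 := by
  split_ifs with h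
  · simp [(hζ.pow_eq_one_iff_dvd m).2 h]
  · rw [geom_sum_eq (fun h' => h ((hζ.pow_eq_one_iff_dvd m).1 h')), pow_right_comm, hζ.pow_eq_one,
      one_pow, sub_self, zero_div]

theorem sum_range_sq_sum_range_mul_pow (hζ : IsPrimitiveRoot ζ n) :
    ∑ j ∈ range n, (∑ k ∈ range n, (k : K) * (ζ ^ j) ^ k) ^ 2
      = n * ((∑ k ∈ range n, k * (n - k) : ℕ) : K) := by
  calc ∑ j ∈ range n, (∑ k ∈ range n, (k : K) * (ζ ^ j) ^ k) ^ 2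
      = ∑ k ∈ range n, ∑ l ∈ range n, (k * l : K) * ∑ j ∈ range n, (ζ ^ (k + l)) ^ j := by
        simp_rw [sq, sum_mul_sum, mul_sum]
        rw [sum_comm]
        refine sum_congr rfl fun k _ => ?_
        rw [sum_comm]
        refine sum_congr rfl fun l _ => sum_congr rfl fun j _ => ?_
        ring
    _ = n * ∑ k ∈ range n, ((∑ l ∈ range n, if n ∣ k + l then k * l else 0 : ℕ) : K) := by
        simp_rw [hζ.sum_range_pow_pow]
        push_cast
        simp_rw [mul_sum]
        refine sum_congr rfl fun k _ => sum_congr rfl fun l _ => ?_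
        split_ifs <;> ring
    _ = n * ((∑ k ∈ range n, k * (n - k) : ℕ) : K) := by
        rw [Nat.cast_sum]
        congr 1
        exact sum_congr rfl fun k hk => by rw [sum_range_ite_dvd_add_mul (mem_range.1 hk)]

theorem geom_sum_ne_zero (hζ : IsPrimitiveRoot ζ n) {j : ℕ} (hj0 : j ≠ 0) (hjn : j < n) :
    ∑ i ∈ range j, ζ ^ i ≠ 0 := fun h =>
  hζ.pow_ne_one_of_pos_of_lt hj0 hjn (sub_eq_zero.1 (by rw [← mul_geom_sum, h, mul_zero]))

theorem sum_inv_pow_sub_one_sq (hζ : IsPrimitiveRoot ζ n) (hn : n ≠ 0) :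
    12 * ∑ j ∈ Ico 1 n, (ζ ^ j - 1)⁻¹ ^ 2 = -(((n : K) - 1) * ((n : K) - 5)) := by
  have : NeZero n := ⟨hn⟩
  have hnK : (n : K) ≠ 0 := hζ.neZero'.out
  set F : ℕ → K := fun j => ∑ k ∈ range n, (k : K) * (ζ ^ j) ^ k
  have hinv : ∀ j ∈ Ico 1 n, (ζ ^ j - 1)⁻¹ = (n : K)⁻¹ * F j := by
    intro j hj
    obtain ⟨hj1, hjn⟩ := mem_Ico.1 hj
    have hpow : (ζ ^ j) ^ n = 1 := by rw [pow_right_comm, hζ.pow_eq_one, one_pow]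
    refine inv_eq_of_mul_eq_one_right ?_
    rw [mul_left_comm, sub_one_mul_sum_range_mul_pow_of_pow_eq_one hpow
      (hζ.pow_ne_one_of_pos_of_lt (by omega) hjn), inv_mul_cancel₀ hnK]
  have hpos : 0 < n := Nat.pos_of_ne_zero hn
  have hsplit := sum_range_eq_add_Ico (fun j => F j ^ 2) hpos
  rw [hζ.sum_range_sq_sum_range_mul_pow] at hsplit
  have hF0 : F 0 = ∑ k ∈ range n, (k : K) := by simp [F]
  have hgauss : (∑ k ∈ range n, (k : K)) * 2 = n * (n - 1) := by
    simpa [Nat.cast_pred hpos] using congrArg (Nat.cast : ℕ → K) (sum_range_id_mul_two n)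
  have hsix : ((∑ k ∈ range n, k * (n - k) : ℕ) : K) * 6 = (n - 1) * n * (n + 1) := by
    simpa [Nat.cast_pred hpos] using congrArg (Nat.cast : ℕ → K) (sum_range_mul_sub_mul_six n)
  have hIco : 12 * ∑ j ∈ Ico 1 n, F j ^ 2 = (n : K) ^ 2 * -(((n : K) - 1) * ((n : K) - 5)) := by
    rw [← add_sub_cancel_left (F 0 ^ 2) (∑ j ∈ Ico 1 n, F j ^ 2), ← hsplit, hF0]
    linear_combination
      2 * (n : K) * hsix - 3 * ((∑ k ∈ range n, (k : K)) * 2 + n * (n - 1)) * hgauss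
  rw [sum_congr rfl fun j hj => by rw [hinv j hj, mul_pow], ← mul_sum, mul_left_comm, hIco,
    inv_pow, inv_mul_cancel_left₀ (pow_ne_zero 2 hnK)]

theorem sum_inv_geom_sum_sq (hζ : IsPrimitiveRoot ζ n) (hn : n ≠ 0) :
    12 * ∑ j ∈ Ico 1 n, (∑ i ∈ range j, ζ ^ i)⁻¹ ^ 2
      = -(((n : K) - 1) * ((n : K) - 5)) * (1 - ζ) ^ 2 := by
  have hterm : ∀ j ∈ Ico 1 n, (∑ i ∈ range j, ζ ^ i)⁻¹ ^ 2 = (1 - ζ) ^ 2 * (ζ ^ j - 1)⁻¹ ^ 2 := by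
    intro j hj
    have hζ1 : ζ - 1 ≠ 0 := sub_ne_zero.2 (hζ.ne_one (by grind))
    rw [← mul_geom_sum, mul_inv, mul_pow, ← mul_assoc, ← neg_sub ζ 1, neg_sq, ← mul_pow,
      mul_inv_cancel₀ hζ1, one_pow, one_mul]
  rw [sum_congr rfl hterm, ← mul_sum, mul_left_comm, hζ.sum_inv_pow_sub_one_sq hn, mul_comm]

end IsPrimitiveRoot

end RootOfUnity

theorem Nat.Prime.twelve_dvd_sub_one_mul_sub_five {p : ℕ} (hp : p.Prime) (h3 : 3 < p) :
    12 ∣ (p - 1) * (p - 5) := by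
  have hodd : p % 2 = 1 := Nat.odd_iff.1 (hp.odd_of_ne_two (by omega))
  have hmod3 : p % 3 ≠ 0 := fun h =>
    absurd ((Nat.prime_dvd_prime_iff_eq Nat.prime_three hp).1 (Nat.dvd_of_mod_eq_zero h)) (by omega)
  rcases (by omega : p % 6 = 1 ∨ p % 6 = 5) with h | h
  · exact Nat.mul_dvd_mul (by omega : 6 ∣ p - 1) (by omega : 2 ∣ p - 5)
  · exact (Nat.mul_dvd_mul (by omega : 2 ∣ p - 1) (by omega : 6 ∣ p - 5) : 2 * 6 ∣ _)

theorem Nat.Prime.cast_sub_one_mul_sub_five_div_twelve {R : Type*} [Ring R] {p : ℕ}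
    (hp : p.Prime) (h3 : 3 < p) :
    (((p - 1) * (p - 5) / 12 : ℕ) : R) * 12 = ((p : R) - 1) * ((p : R) - 5) := by
  have h := congrArg (Nat.cast : ℕ → R) (Nat.div_mul_cancel (hp.twelve_dvd_sub_one_mul_sub_five h3))
  have h5 : 5 ≤ p := hp.five_le_of_ne_two_of_ne_three (by omega) (by omega)
  rw [Nat.cast_mul, Nat.cast_mul, Nat.cast_sub (by omega : 1 ≤ p), Nat.cast_sub h5] at h
  simpa using h

theorem aeval_qnum {A : Type*} [CommRing A] [Algebra ℚ A] (x : A) (n : ℕ) :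
    aeval x (qnum n) = ∑ i ∈ range n, x ^ i := by
  simp [qnum]

theorem minpoly_eq_qnum {A : Type*} [Field A] [CharZero A] {p : ℕ} (hp : p.Prime) {ζ : A}
    (hζ : IsPrimitiveRoot ζ p) : minpoly ℚ ζ = qnum p := by
  have : Fact p.Prime := ⟨hp⟩
  rw [← cyclotomic_eq_minpoly_rat hζ hp.pos, cyclotomic_prime, qnum]

/-- For a prime `p > 3`,
`∑_{j=1}^{p-1} 1/[j]_q² ≡ -((p-1)(p-5)/12)(1-q)² (mod [p]_q)` in the localization of
`ℚ[q]` at `[p]_q`. -/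
theorem q_sum_inv_sq (p : ℕ) (hp : p.Prime) (h3 : 3 < p) :
    ModPow p 1 ((∑ j ∈ Finset.Icc 1 (p-1), (Φ (qnum j))⁻¹^2)
      + Φ ((((p-1)*(p-5)/12 : ℕ) : ℚ[X]) * (1 - X)^2)) := by
  obtain ⟨ζ, hζ⟩ : ∃ ζ : ℂ, IsPrimitiveRoot ζ p := ⟨_, Complex.isPrimitiveRoot_exp p hp.ne_zero⟩
  refine modPow_one_of_hasValueAt_zero (minpoly_eq_qnum hp hζ) ?_
  have hinv : ∀ j ∈ Icc 1 (p - 1), HasValueAt ζ (Φ (qnum j))⁻¹ (∑ i ∈ range j, ζ ^ i)⁻¹ := by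
    intro j hj
    rw [← aeval_qnum]
    exact (hasValueAt_algebraMap ζ _).inv
      (by rw [aeval_qnum]; exact hζ.geom_sum_ne_zero (by grind) (by grind))
  convert (HasValueAt.sum fun j hj => (hinv j hj).pow 2).add
    (hasValueAt_algebraMap ζ ((((p-1)*(p-5)/12 : ℕ) : ℚ[X]) * (1 - X)^2)) using 1
  · rfl
  have hsum := hζ.sum_inv_geom_sum_sq hp.ne_zero
  rw [show Icc 1 (p - 1) = Ico 1 p by grind]
  simp only [map_mul, map_pow, map_sub, map_one, aeval_X, map_natCast]
  linear_combination (-1 / 12 : ℂ) * hsum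
    - (1 - ζ) ^ 2 / 12 * hp.cast_sub_one_mul_sub_five_div_twelve (R := ℂ) h3
end

section
/- Let p be an odd prime and m a positive integer with gcd(m,p) = 1. Then Q_p(m,q) ≡ ∑_{j=1}^{p-1} ⌊jm/p⌋/[jm]_q - ((p-1)(m-1)/2)(1-q) (mod [p]_q), in the localization of ℚ[q] at [p]_q. -/
/-!
Write `jm = p a_j + r_j` with `0 < r_j < p`. As `j ↦ r_j` permutes `1, …, p - 1`,
`(q^m;q^m)_{p-1} / (q;q)_{p-1} = ∏_j (1 - q^{jm}) / (1 - q^{r_j})`, and each factor equals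
`1 + [p]_q g_j` with `g_j = q^{r_j} [a_j]_{q^p} / [r_j]_q`, a `[p]_q`-integral rational function.
Expanding the product modulo `[p]_q²` gives `Q_p(m,q) ≡ ∑_j g_j`. Modulo `[p]_q` we may evaluate at
a primitive `p`-th root of unity `ζ`, where `ζ^{r_j} = ζ^{jm}`, `[a_j]_{ζ^p} = a_j` and
`[r_j]_ζ = [jm]_ζ`; so `g_j ≡ a_j q^{jm} / [jm]_q = a_j / [jm]_q - a_j (1 - q)`. Finally, summing
`jm = p a_j + r_j` over `j` gives `∑_j a_j = (p - 1)(m - 1) / 2`.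
-/

open Polynomial Finset

/-- The `q`-Fermat quotient `Q_p(m,q) = ((q^m;q^m)_{p-1}/(q;q)_{p-1} - 1)/[p]_q`,
as an element of `ℚ(q)`. -/
noncomputable def Qm (p m : ℕ) : RatFunc ℚ :=
  (Φ (∏ j ∈ Finset.Icc 1 (p-1), (1 - X^(m*j)))
    / Φ (∏ j ∈ Finset.Icc 1 (p-1), (1 - X^j)) - 1) / Φ (qnum p)

theorem Subring.exists_prod_one_add_mul_sub_one_sub {R ι : Type*} [CommRing R] (S : Subring R)
    (s : Finset ι) {t : R} (ht : t ∈ S) {g : ι → R} (hg : ∀ i ∈ s, g i ∈ S) :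
    ∃ c ∈ S, ∏ i ∈ s, (1 + t * g i) - 1 - t * ∑ i ∈ s, g i = t ^ 2 * c := by
  classical
  induction s using Finset.induction_on with
  | empty => exact ⟨0, S.zero_mem, by simp⟩
  | insert i s hi ih =>
    obtain ⟨c, hc, hprod⟩ := ih fun j hj => hg j (mem_insert_of_mem hj)
    have hgi := hg i (mem_insert_self i s)
    refine ⟨(1 + t * g i) * c + g i * ∑ j ∈ s, g j, ?_, ?_⟩
    · exact add_mem (mul_mem (add_mem S.one_mem (mul_mem ht hgi)) hc)
        (mul_mem hgi (sum_mem fun j hj => hg j (mem_insert_of_mem hj)))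
    · rw [prod_insert hi, sum_insert hi]
      linear_combination (1 + t * g i) * hprod

section Reindex

variable {m p : ℕ}

theorem not_dvd_mul_of_mem_Icc (hmp : m.Coprime p) {j : ℕ} (hj : j ∈ Icc 1 (p - 1)) :
    ¬ p ∣ j * m := by
  rw [mem_Icc] at hj
  exact fun h => Nat.not_dvd_of_pos_of_lt (by omega) (by omega) (hmp.symm.dvd_of_dvd_mul_right h)

theorem mul_mod_mem_Icc (hmp : m.Coprime p) {j : ℕ} (hj : j ∈ Icc 1 (p - 1)) :
    j * m % p ∈ Icc 1 (p - 1) := by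
  have hpos := Nat.pos_of_ne_zero fun h =>
    not_dvd_mul_of_mem_Icc hmp hj (Nat.dvd_of_mod_eq_zero h)
  have := Nat.mod_lt (j * m) (show 0 < p by rw [mem_Icc] at hj; omega)
  rw [mem_Icc]
  omega

theorem injOn_mul_mod (hmp : m.Coprime p) : Set.InjOn (fun j => j * m % p) (Icc 1 (p - 1)) := by
  intro i hi j hj hij
  simp only [coe_Icc, Set.mem_Icc] at hi hj
  have hij : m * i ≡ m * j [MOD p] := by simpa only [Nat.ModEq, mul_comm m] using hij
  exact (Nat.ModEq.cancel_left_of_coprime hmp.symm hij).eq_of_lt_of_lt (by omega) (by omega)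

@[to_additive sum_Icc_mul_mod]
theorem prod_Icc_mul_mod {M : Type*} [CommMonoid M] (hmp : m.Coprime p) (F : ℕ → M) :
    ∏ j ∈ Icc 1 (p - 1), F (j * m % p) = ∏ j ∈ Icc 1 (p - 1), F j :=
  prod_nbij _ (fun _ => mul_mod_mem_Icc hmp) (injOn_mul_mod hmp)
    (surjOn_of_injOn_of_card_le _ (fun _ => mul_mod_mem_Icc hmp) (injOn_mul_mod hmp) le_rfl)
    fun _ _ => rfl

theorem sum_Icc_mul_div (hmp : m.Coprime p) :
    ∑ j ∈ Icc 1 (p - 1), j * m / p = (p - 1) * (m - 1) / 2 := by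
  obtain rfl | hm := Nat.eq_zero_or_pos m
  · simp [(Nat.coprime_zero_left p).mp hmp]
  obtain rfl | hp := Nat.eq_zero_or_pos p
  · simp
  have hgauss : (∑ j ∈ Icc 1 (p - 1), j) * 2 = p * (p - 1) := by
    rw [← sum_range_id_mul_two, range_eq_Ico, sum_eq_sum_Ico_succ_bot hp, zero_add]
    congr 2
  have hperm : ∑ j ∈ Icc 1 (p - 1), j * m % p = ∑ j ∈ Icc 1 (p - 1), j :=
    sum_Icc_mul_mod hmp (fun j => j)
  have hsplit : (∑ j ∈ Icc 1 (p - 1), j) * m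
      = p * ∑ j ∈ Icc 1 (p - 1), j * m / p + ∑ j ∈ Icc 1 (p - 1), j := by
    rw [sum_mul, mul_sum, ← hperm, ← sum_add_distrib]
    exact sum_congr rfl fun j _ => (Nat.div_add_mod _ _).symm
  generalize ∑ j ∈ Icc 1 (p - 1), j * m / p = A at hsplit ⊢
  generalize ∑ j ∈ Icc 1 (p - 1), j = T at hsplit hgauss
  obtain ⟨k, rfl⟩ : ∃ k, m = k + 1 := ⟨m - 1, by omega⟩
  obtain ⟨l, rfl⟩ : ∃ l, p = l + 1 := ⟨p - 1, by omega⟩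
  rw [Nat.add_sub_cancel] at hgauss
  have : 2 * A = l * k := Nat.eq_of_mul_eq_mul_left hp (by nlinarith)
  rw [Nat.add_sub_cancel, Nat.add_sub_cancel, ← this, Nat.mul_div_cancel_left _ two_pos]

end Reindex

theorem Φ_ne_zero {a : ℚ[X]} (ha : a ≠ 0) : Φ a ≠ 0 :=
  (map_ne_zero_iff Φ (RatFunc.algebraMap_injective ℚ)).mpr ha

section QNumber

theorem qnum_mul_X_sub_one (n : ℕ) : qnum n * (X - 1) = X ^ n - 1 := geom_sum_mul X n

theorem qnum_ne_zero {n : ℕ} (hn : n ≠ 0) : qnum n ≠ 0 := fun h => by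
  simpa [qnum, eval_finsetSum, hn] using congrArg (eval 1) h

theorem qnum_mul_expand_qnum (p a : ℕ) : qnum p * expand ℚ p (qnum a) = qnum (p * a) := by
  refine mul_right_cancel₀ (X_sub_C_ne_zero (1 : ℚ)) ?_
  have h := congrArg (expand ℚ p) (qnum_mul_X_sub_one a)
  simp only [map_mul, map_sub, map_pow, map_one, expand_X] at h
  rw [C_1, mul_right_comm, qnum_mul_X_sub_one, qnum_mul_X_sub_one, mul_comm, h, pow_mul]

variable {p : ℕ}

theorem qnum_eq_cyclotomic (hp : p.Prime) : qnum p = cyclotomic p ℚ := by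
  have := Fact.mk hp
  rw [cyclotomic_prime]
  rfl

theorem prime_qnum (hp : p.Prime) : Prime (qnum p) :=
  qnum_eq_cyclotomic hp ▸ (cyclotomic.irreducible_rat hp.pos).prime

theorem qnum_dvd_iff_aeval_eq_zero {K : Type*} [Field K] [CharZero K] {ζ : K} (hp : p.Prime)
    (hζ : IsPrimitiveRoot ζ p) {A : ℚ[X]} : qnum p ∣ A ↔ aeval ζ A = 0 := by
  rw [qnum_eq_cyclotomic hp, cyclotomic_eq_minpoly_rat hζ hp.pos, minpoly.dvd_iff]

theorem aeval_qnum_mul_sub_one {R : Type*} [CommRing R] [Algebra ℚ R] (ζ : R) (n : ℕ) :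
    aeval ζ (qnum n) * (ζ - 1) = ζ ^ n - 1 := by
  simpa using congrArg (aeval ζ) (qnum_mul_X_sub_one n)

theorem IsPrimitiveRoot.aeval_qnum_mod {K : Type*} [Field K] [CharZero K] {ζ : K}
    (hζ : IsPrimitiveRoot ζ p) (hp : 1 < p) (n : ℕ) :
    aeval ζ (qnum (n % p)) = aeval ζ (qnum n) := by
  refine mul_right_cancel₀ (sub_ne_zero.mpr (hζ.ne_one hp)) ?_
  rw [aeval_qnum_mul_sub_one, aeval_qnum_mul_sub_one, hζ.eq_orderOf, pow_mod_orderOf]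

theorem not_qnum_dvd_qnum (hp : p.Prime) {n : ℕ} (hn : ¬ p ∣ n) : ¬ qnum p ∣ qnum n := by
  obtain ⟨ζ, hζ⟩ : ∃ ζ : ℂ, IsPrimitiveRoot ζ p := ⟨_, Complex.isPrimitiveRoot_exp p hp.ne_zero⟩
  rw [qnum_dvd_iff_aeval_eq_zero hp hζ]
  intro h
  have := aeval_qnum_mul_sub_one ζ n
  rw [h, zero_mul, eq_comm, sub_eq_zero, hζ.pow_eq_one_iff_dvd] at this
  exact hn this

end QNumber

section Localization

def localSubring (f : ℚ[X]) (hf : Prime f) : Subring (RatFunc ℚ) where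
  carrier := {x | ∃ a b : ℚ[X], ¬ f ∣ b ∧ x * Φ b = Φ a}
  mul_mem' := by
    rintro x y ⟨a, b, hb, hx⟩ ⟨c, d, hd, hy⟩
    refine ⟨a * c, b * d, fun h => (hf.dvd_or_dvd h).elim hb hd, ?_⟩
    rw [map_mul, map_mul, ← hx, ← hy]
    ring
  one_mem' := ⟨1, 1, hf.not_dvd_one, by simp⟩
  add_mem' := by
    rintro x y ⟨a, b, hb, hx⟩ ⟨c, d, hd, hy⟩
    refine ⟨a * d + b * c, b * d, fun h => (hf.dvd_or_dvd h).elim hb hd, ?_⟩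
    rw [map_add, map_mul, map_mul, map_mul, ← hx, ← hy]
    ring
  zero_mem' := ⟨0, 1, hf.not_dvd_one, by simp⟩
  neg_mem' := by
    rintro x ⟨a, b, hb, hx⟩
    exact ⟨-a, b, hb, by rw [map_neg, ← hx, neg_mul]⟩

variable {f : ℚ[X]} (hf : Prime f)

theorem div_mem_localSubring {a b : ℚ[X]} (hb : ¬ f ∣ b) : Φ a / Φ b ∈ localSubring f hf :=
  ⟨a, b, hb, div_mul_cancel₀ _ (Φ_ne_zero fun h => hb (h ▸ dvd_zero f))⟩

theorem Φ_mem_localSubring (a : ℚ[X]) : Φ a ∈ localSubring f hf :=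
  ⟨a, 1, hf.not_dvd_one, by simp⟩

end Localization

section ModPow

variable {p k : ℕ} (hp : p.Prime)
include hp

theorem modPow_iff {x : RatFunc ℚ} :
    ModPow p k x ↔ ∃ y ∈ localSubring (qnum p) (prime_qnum hp), x = Φ (qnum p) ^ k * y := by
  constructor
  · rintro ⟨a, b, hb, hx⟩
    have hb0 : b ≠ 0 := by rintro rfl; exact hb (dvd_zero _)
    refine ⟨Φ a / Φ b, div_mem_localSubring _ hb, ?_⟩
    rw [mul_div_assoc', ← map_pow, ← map_mul, ← hx, mul_div_cancel_right₀ _ (Φ_ne_zero hb0)]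
  · rintro ⟨y, ⟨a, b, hb, hy⟩, rfl⟩
    exact ⟨a, b, hb, by rw [mul_assoc, hy, map_mul, map_pow]⟩

theorem ModPow.add {x y : RatFunc ℚ} (hx : ModPow p k x) (hy : ModPow p k y) :
    ModPow p k (x + y) := by
  obtain ⟨u, hu, rfl⟩ := (modPow_iff hp).mp hx
  obtain ⟨v, hv, rfl⟩ := (modPow_iff hp).mp hy
  exact (modPow_iff hp).mpr ⟨u + v, add_mem hu hv, by ring⟩

theorem ModPow.sum {ι : Type*} {s : Finset ι} {x : ι → RatFunc ℚ}
    (hx : ∀ i ∈ s, ModPow p k (x i)) : ModPow p k (∑ i ∈ s, x i) :=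
  sum_induction _ _ (fun _ _ => ModPow.add hp)
    ((modPow_iff hp).mpr ⟨0, zero_mem _, by simp⟩) hx

theorem modPow_div_of_dvd {a b : ℚ[X]} (ha : qnum p ^ k ∣ a) (hb : ¬ qnum p ∣ b) :
    ModPow p k (Φ a / Φ b) := by
  obtain ⟨c, rfl⟩ := ha
  exact (modPow_iff hp).mpr ⟨Φ c / Φ b, div_mem_localSubring _ hb, by rw [map_mul, map_pow]; ring⟩

theorem modPow_prod_one_add_sub {ι : Type*} (s : Finset ι) {g : ι → RatFunc ℚ}
    (hg : ∀ i ∈ s, g i ∈ localSubring (qnum p) (prime_qnum hp)) :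
    ModPow p 1 ((∏ i ∈ s, (1 + Φ (qnum p) * g i) - 1) / Φ (qnum p) - ∑ i ∈ s, g i) := by
  obtain ⟨c, hc, hprod⟩ := (localSubring _ (prime_qnum hp)).exists_prod_one_add_mul_sub_one_sub s
    (Φ_mem_localSubring _ _) hg
  refine (modPow_iff hp).mpr ⟨c, hc, ?_⟩
  have hπ : Φ (qnum p) ≠ 0 := Φ_ne_zero (qnum_ne_zero hp.ne_zero)
  rw [div_sub' hπ, div_eq_iff hπ]
  linear_combination hprod

end ModPow

theorem one_sub_X_pow_mul_qnum (p a r : ℕ) :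
    (1 - X ^ (p * a + r)) * qnum r
      = (1 - X ^ r) * (qnum r + qnum p * (X ^ r * expand ℚ p (qnum a))) := by
  linear_combination (-(1 - X ^ r) * X ^ r) * qnum_mul_expand_qnum p a
    + X ^ r * qnum r * qnum_mul_X_sub_one (p * a) - X ^ r * qnum (p * a) * qnum_mul_X_sub_one r

noncomputable def qFermatSummand (p n : ℕ) : RatFunc ℚ :=
  Φ (X ^ (n % p) * expand ℚ p (qnum (n / p))) / Φ (qnum (n % p))

theorem Φ_one_sub_X_pow_div {p n : ℕ} (hn : ¬ p ∣ n) :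
    Φ (1 - X ^ n) / Φ (1 - X ^ (n % p)) = 1 + Φ (qnum p) * qFermatSummand p n := by
  have hr : n % p ≠ 0 := fun h => hn (Nat.dvd_of_mod_eq_zero h)
  have h := congrArg Φ (one_sub_X_pow_mul_qnum p (n / p) (n % p))
  rw [Nat.div_add_mod] at h
  have hq : Φ (qnum (n % p)) ≠ 0 := Φ_ne_zero (qnum_ne_zero hr)
  have h1 : Φ (1 - X ^ (n % p)) ≠ 0 := by
    refine Φ_ne_zero fun h0 => X_pow_sub_C_ne_zero (Nat.pos_of_ne_zero hr) (1 : ℚ) ?_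
    rw [C_1, ← neg_sub, h0, neg_zero]
  rw [qFermatSummand, map_mul, div_eq_iff h1]
  field_simp
  simp only [map_mul, map_add] at h
  linear_combination h

section Summand

variable {p n : ℕ} (hp : p.Prime) (hn : ¬ p ∣ n)
include hp hn

theorem qFermatSummand_mem_localSubring :
    qFermatSummand p n ∈ localSubring (qnum p) (prime_qnum hp) :=
  div_mem_localSubring _ (not_qnum_dvd_qnum hp fun h => hn ((Nat.dvd_mod_iff dvd_rfl).mp h))

theorem modPow_qFermatSummand_sub :
    ModPow p 1 (qFermatSummand p n
      - (((n / p : ℕ) : RatFunc ℚ) / Φ (qnum n) - Φ (((n / p : ℕ) : ℚ[X]) * (1 - X)))) := by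
  have hr : ¬ p ∣ n % p := fun h => hn ((Nat.dvd_mod_iff dvd_rfl).mp h)
  have hqr := qnum_ne_zero (n := n % p) fun h => hr (h ▸ dvd_zero p)
  have hqn := qnum_ne_zero (n := n) fun h => hn (h ▸ dvd_zero p)
  have hX := congrArg Φ (qnum_mul_X_sub_one n)
  -- `a / [n]_q - a (1 - q) = a q^n / [n]_q`
  have hsum : qFermatSummand p n
      - (((n / p : ℕ) : RatFunc ℚ) / Φ (qnum n) - Φ (((n / p : ℕ) : ℚ[X]) * (1 - X)))
      = Φ (X ^ (n % p) * expand ℚ p (qnum (n / p)) * qnum n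
          - ((n / p : ℕ) : ℚ[X]) * X ^ n * qnum (n % p)) / Φ (qnum (n % p) * qnum n) := by
    rw [qFermatSummand]
    simp only [map_mul, map_sub, map_natCast, map_pow, map_one] at hX ⊢
    field_simp [Φ_ne_zero hqr, Φ_ne_zero hqn]
    linear_combination (-((n / p : ℕ) : RatFunc ℚ) * Φ (qnum (n % p))) * hX
  rw [hsum]
  refine modPow_div_of_dvd hp ?_ fun h => ((prime_qnum hp).dvd_or_dvd h).elim
    (not_qnum_dvd_qnum hp hr) (not_qnum_dvd_qnum hp hn)
  obtain ⟨ζ, hζ⟩ : ∃ ζ : ℂ, IsPrimitiveRoot ζ p := ⟨_, Complex.isPrimitiveRoot_exp p hp.ne_zero⟩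
  have hpow : ζ ^ (n % p) = ζ ^ n := by rw [hζ.eq_orderOf, pow_mod_orderOf]
  have hE : aeval ζ (expand ℚ p (qnum (n / p))) = (n / p : ℕ) := by simp [qnum, hζ.pow_eq_one]
  rw [pow_one, qnum_dvd_iff_aeval_eq_zero hp hζ]
  simp only [map_sub, map_mul, map_pow, aeval_X, map_natCast, hE, hpow, hζ.aeval_qnum_mod hp.one_lt]
  ring

end Summand

theorem q_lerch_general (p m : ℕ) (hp : p.Prime) (hmp : Nat.Coprime m p) :
    ModPow p 1
      (Qm p m
        - ((∑ j ∈ Finset.Icc 1 (p-1), ((j*m/p : ℕ) : RatFunc ℚ) / Φ (qnum (j*m)))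
            - Φ (((((p-1)*(m-1)/2 : ℕ)) : ℚ[X]) * (1 - X)))) := by
  have hpj : ∀ j ∈ Icc 1 (p - 1), ¬ p ∣ j * m := fun j => not_dvd_mul_of_mem_Icc hmp
  have hQ : Qm p m = (∏ j ∈ Icc 1 (p - 1), (1 + Φ (qnum p) * qFermatSummand p (j * m)) - 1)
      / Φ (qnum p) := by
    rw [Qm, map_prod, map_prod, ← prod_Icc_mul_mod hmp (fun j => Φ (1 - X ^ j)),
      ← prod_div_distrib]
    congr 2
    exact prod_congr rfl fun j hj => by rw [mul_comm m j]; exact Φ_one_sub_X_pow_div (hpj j hj)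
  have hB := modPow_prod_one_add_sub hp (Icc 1 (p - 1))
    fun j hj => qFermatSummand_mem_localSubring hp (hpj j hj)
  have hC := ModPow.sum hp fun j hj => modPow_qFermatSummand_sub hp (hpj j hj)
  rw [sum_sub_distrib, sum_sub_distrib, ← map_sum, ← sum_mul, ← Nat.cast_sum,
    sum_Icc_mul_div hmp] at hC
  rw [← hQ] at hB
  convert hB.add hp hC using 1
  ring

/-- For an odd prime `p` and a positive integer `m` with `gcd(m,p)=1`,
`Q_p(m,q) ≡ ∑_{j=1}^{p-1} ⌊jm/p⌋/[jm]_q - ((p-1)(m-1)/2)(1-q) (mod [p]_q)`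
in the localization of `ℚ[q]` at `[p]_q`. -/
theorem q_lerch (p m : ℕ) (hp : p.Prime) (hodd : Odd p) (hm : 0 < m)
    (hmp : Nat.Coprime m p) :
    ModPow p 1
      (Qm p m
        - ((∑ j ∈ Finset.Icc 1 (p-1), ((j*m/p : ℕ) : RatFunc ℚ) / Φ (qnum (j*m)))
            - Φ (((((p-1)*(m-1)/2 : ℕ)) : ℚ[X]) * (1 - X)))) :=
  q_lerch_general p m hp hmp
end

section
/- For every positive integer n, the identity ∑_{k=1}^{n} (-1)^k · C(n,k)_q · q^{binom(n-k,2)} · (-q;q)_k/[k]_q = q^{binom(n,2)} · ∑_{k=1}^{n} ((-q)^k - 1)/[k]_q holds in the field of rational functions ℚ(q). -/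
open Polynomial Finset

/-! Work over any field in which `q` is not a root of unity, and write
`T(n, k) = (-1)^k C(n,k)_q q^C(n-k,2) (-q;q)_k`. The q-Pascal rule and the absorption identity
`[n+1]_q C(n,k)_q = [k+1]_q C(n+1,k+1)_q` give
`T(n+1, k)/[k]_q = q^n T(n, k)/[k]_q + T(n+1, k)/[n+1]_q`,
so both sides of the identity obey the same recursion in `n` as soon as one knows
`∑_{k=0}^n T(n, k) = (-1)^n q^C(n+1,2)`. For that closed form, expand
`(-q;q)_k = ∑_j C(k,j)_q q^(C(j,2)+j)` by the q-binomial theorem and use trinomial revision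
`C(n,k)_q C(k,j)_q = C(n,j)_q C(n-j,k-j)_q`: everything reduces to
`∑_m (-1)^m C(c,m)_q q^C(c-m,2) = [c = 0]`, which is the q-binomial theorem at `x = -1`. -/

section QAnalogs

variable {K : Type*} [Field K]

def qPochhammer (q : K) (n : ℕ) : K := ∏ j ∈ Icc 1 n, (1 - q ^ j)

/-- The Gaussian binomial coefficient, extended by `0` for `k > n`. -/
def qBinom (q : K) (n k : ℕ) : K :=
  if k ≤ n then qPochhammer q n / (qPochhammer q k * qPochhammer q (n - k)) else 0

def qInt (q : K) (k : ℕ) : K := ∑ i ∈ range k, q ^ i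

def qTerm (q : K) (n k : ℕ) : K :=
  (-1) ^ k * qBinom q n k * (q ^ (n - k).choose 2 * ∏ i ∈ Icc 1 k, (1 + q ^ i))

theorem choose_two_add_one (n : ℕ) : (n + 1).choose 2 = n.choose 2 + n := by
  rw [Nat.choose_succ_succ', Nat.choose_one_right, add_comm]

variable {q : K}

theorem one_sub_pow_ne_zero (hq : ¬IsOfFinOrder q) {j : ℕ} (hj : 0 < j) : 1 - q ^ j ≠ 0 :=
  sub_ne_zero.2 fun h => hq (isOfFinOrder_iff_pow_eq_one.2 ⟨j, hj, h.symm⟩)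

@[simp]
theorem qPochhammer_zero (q : K) : qPochhammer q 0 = 1 := by simp [qPochhammer]

theorem qPochhammer_succ (q : K) (n : ℕ) :
    qPochhammer q (n + 1) = qPochhammer q n * (1 - q ^ (n + 1)) :=
  prod_Icc_succ_top (by omega) _

theorem qPochhammer_ne_zero (hq : ¬IsOfFinOrder q) (n : ℕ) : qPochhammer q n ≠ 0 :=
  prod_ne_zero_iff.2 fun _ hj => one_sub_pow_ne_zero hq (mem_Icc.1 hj).1

theorem qInt_ne_zero (hq : ¬IsOfFinOrder q) {k : ℕ} (hk : 0 < k) : qInt q k ≠ 0 :=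
  right_ne_zero_of_mul <| (mul_neg_geom_sum q k).trans_ne (one_sub_pow_ne_zero hq hk)

theorem qBinom_of_le (q : K) {n k : ℕ} (h : k ≤ n) :
    qBinom q n k = qPochhammer q n / (qPochhammer q k * qPochhammer q (n - k)) :=
  if_pos h

theorem qBinom_of_lt (q : K) {n k : ℕ} (h : n < k) : qBinom q n k = 0 :=
  if_neg (not_le.2 h)

theorem qBinom_of_add_eq (q : K) {a b n : ℕ} (h : a + b = n) :
    qBinom q n a = qPochhammer q n / (qPochhammer q a * qPochhammer q b) := by
  rw [qBinom_of_le q (by omega), show n - a = b by omega]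

theorem qBinom_zero_right (hq : ¬IsOfFinOrder q) (n : ℕ) : qBinom q n 0 = 1 := by
  rw [qBinom_of_add_eq q (zero_add n), qPochhammer_zero, one_mul,
    div_self (qPochhammer_ne_zero hq n)]

theorem qBinom_self (hq : ¬IsOfFinOrder q) (n : ℕ) : qBinom q n n = 1 := by
  rw [qBinom_of_add_eq q (add_zero n), qPochhammer_zero, mul_one,
    div_self (qPochhammer_ne_zero hq n)]

theorem qBinom_symm (q : K) {n k : ℕ} (h : k ≤ n) : qBinom q n (n - k) = qBinom q n k := by
  rw [qBinom_of_add_eq q (Nat.sub_add_cancel h), qBinom_of_le q h, mul_comm]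

theorem qBinom_succ_succ (hq : ¬IsOfFinOrder q) (n k : ℕ) :
    qBinom q (n + 1) (k + 1) = qBinom q n k + q ^ (k + 1) * qBinom q n (k + 1) := by
  rcases lt_trichotomy k n with h | rfl | h
  · obtain ⟨b, rfl⟩ : ∃ b, n = k + b + 1 := ⟨n - k - 1, by omega⟩
    rw [qBinom_of_add_eq q (show (k + 1) + (b + 1) = k + b + 1 + 1 by omega),
      qBinom_of_add_eq q (show k + (b + 1) = k + b + 1 by omega),
      qBinom_of_add_eq q (show (k + 1) + b = k + b + 1 by omega),
      qPochhammer_succ q (k + b + 1), qPochhammer_succ q k, qPochhammer_succ q b]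
    have := qPochhammer_ne_zero hq k
    have := qPochhammer_ne_zero hq b
    have := qPochhammer_ne_zero hq (k + b + 1)
    have := one_sub_pow_ne_zero hq k.succ_pos
    have := one_sub_pow_ne_zero hq b.succ_pos
    field_simp
    ring
  · rw [qBinom_self hq, qBinom_self hq, qBinom_of_lt q k.lt_succ_self, mul_zero, add_zero]
  · rw [qBinom_of_lt q (by omega), qBinom_of_lt q h, qBinom_of_lt q (by omega), mul_zero,
      add_zero]

theorem qBinom_add_mul (hq : ¬IsOfFinOrder q) (n j m : ℕ) :
    qBinom q n (j + m) * qBinom q (j + m) j = qBinom q n j * qBinom q (n - j) m := by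
  by_cases h : j + m ≤ n
  · obtain ⟨e, rfl⟩ : ∃ e, n = j + m + e := ⟨n - (j + m), by omega⟩
    rw [show j + m + e - j = m + e by omega, qBinom_of_add_eq q (rfl : j + m + e = _),
      qBinom_of_add_eq q (rfl : j + m = _), qBinom_of_add_eq q (add_assoc j m e).symm,
      qBinom_of_add_eq q (rfl : m + e = _)]
    have := qPochhammer_ne_zero hq j
    have := qPochhammer_ne_zero hq m
    have := qPochhammer_ne_zero hq e
    have := qPochhammer_ne_zero hq (j + m)
    have := qPochhammer_ne_zero hq (m + e)
    field_simp
  · rw [qBinom_of_lt q (not_le.1 h), zero_mul]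
    rcases le_or_gt j n with hj | hj
    · rw [qBinom_of_lt q (show n - j < m by omega), mul_zero]
    · rw [qBinom_of_lt q hj, zero_mul]

theorem qInt_succ_mul_qBinom (hq : ¬IsOfFinOrder q) (n k : ℕ) :
    qInt q (n + 1) * qBinom q n k = qInt q (k + 1) * qBinom q (n + 1) (k + 1) := by
  refine mul_left_cancel₀ (show 1 - q ≠ 0 by simpa using one_sub_pow_ne_zero hq one_pos) ?_
  simp only [qInt, ← mul_assoc, mul_neg_geom_sum]
  rcases le_or_gt k n with h | h
  · obtain ⟨b, rfl⟩ : ∃ b, n = k + b := ⟨n - k, by omega⟩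
    rw [qBinom_of_add_eq q (rfl : k + b = _),
      qBinom_of_add_eq q (show k + 1 + b = k + b + 1 by omega),
      qPochhammer_succ q (k + b), qPochhammer_succ q k]
    have := qPochhammer_ne_zero hq k
    have := qPochhammer_ne_zero hq b
    have := qPochhammer_ne_zero hq (k + b)
    have := one_sub_pow_ne_zero hq k.succ_pos
    field_simp
  · rw [qBinom_of_lt q h, qBinom_of_lt q (by omega), mul_zero, mul_zero]

theorem sum_range_qBinom_mul_of_lt (q : K) {n N : ℕ} (h : n < N) (f : ℕ → K) :
    ∑ k ∈ range N, qBinom q n k * f k = ∑ k ∈ range (n + 1), qBinom q n k * f k :=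
  (sum_subset (range_subset_range.2 h) fun k _ hk => by
    rw [qBinom_of_lt q (by simpa using hk), zero_mul]).symm

theorem prod_one_add_mul_pow_eq_sum_qBinom (hq : ¬IsOfFinOrder q) (n : ℕ) (x : K) :
    ∏ i ∈ range n, (1 + x * q ^ i) =
      ∑ k ∈ range (n + 1), qBinom q n k * (q ^ k.choose 2 * x ^ k) := by
  induction n generalizing x with
  | zero => simp [qBinom_self hq]
  | succ n ih =>
    set S := ∑ k ∈ range (n + 1), qBinom q n k * (q ^ k.choose 2 * (x * q) ^ k) with hSdef
    have hS : S = ∑ k ∈ range (n + 1),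
        q ^ (k + 1) * qBinom q n (k + 1) * (q ^ (k + 1).choose 2 * x ^ (k + 1)) + 1 := by
      rw [hSdef, ← sum_range_qBinom_mul_of_lt q (show n < n + 2 by omega), sum_range_succ',
        qBinom_zero_right hq, show Nat.choose 0 2 = 0 from rfl]
      simp only [pow_zero, mul_one]
      congr 1
      exact sum_congr rfl fun k _ => by ring
    have hxS : ∑ k ∈ range (n + 1), qBinom q n k * (q ^ (k + 1).choose 2 * x ^ (k + 1)) =
        x * S := by
      rw [mul_sum]
      refine sum_congr rfl fun k _ => ?_
      rw [choose_two_add_one]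
      ring
    calc ∏ i ∈ range (n + 1), (1 + x * q ^ i) = (1 + x) * S := by
          simp only [prod_range_succ', pow_succ', ← mul_assoc, pow_zero, mul_one]
          rw [ih, mul_comm]
      _ = _ := by
          rw [sum_range_succ' _ (n + 1)]
          simp only [qBinom_succ_succ hq, add_mul, sum_add_distrib]
          rw [qBinom_zero_right hq, show Nat.choose 0 2 = 0 from rfl]
          linear_combination hS - hxS

theorem prod_Icc_one_add_pow_eq_sum_qBinom (hq : ¬IsOfFinOrder q) (k : ℕ) :
    ∏ i ∈ Icc 1 k, (1 + q ^ i) =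
      ∑ j ∈ range (k + 1), qBinom q k j * q ^ (j.choose 2 + j) := by
  rw [← Ico_add_one_right_eq_Icc, prod_Ico_eq_prod_range, Nat.add_sub_cancel]
  simp only [add_comm 1, pow_succ', pow_add, prod_one_add_mul_pow_eq_sum_qBinom hq k q]

theorem sum_range_neg_one_pow_mul_qBinom_mul_pow (hq : ¬IsOfFinOrder q) (n : ℕ) :
    ∑ m ∈ range (n + 1), (-1) ^ m * qBinom q n m * q ^ (n - m).choose 2 =
      if n = 0 then 1 else 0 := by
  rcases n with _ | n
  · simp [qBinom_self hq]
  have hvanish := prod_one_add_mul_pow_eq_sum_qBinom hq (n + 1) (-1)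
  rw [prod_range_succ', pow_zero, mul_one, add_neg_cancel, mul_zero, eq_comm] at hvanish
  rw [if_neg n.succ_ne_zero, ← sum_range_reflect]
  calc _ = (-1) ^ (n + 1) *
        ∑ j ∈ range (n + 2), qBinom q (n + 1) j * (q ^ j.choose 2 * (-1) ^ j) := by
        rw [mul_sum]
        refine sum_congr rfl fun j hj => ?_
        have hj : j ≤ n + 1 := by simpa [Nat.lt_succ_iff] using hj
        obtain ⟨d, hd⟩ : ∃ d, n + 1 = j + d := ⟨n + 1 - j, by omega⟩
        rw [show n + 1 + 1 - 1 - j = n + 1 - j by omega, qBinom_symm q hj,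
          show n + 1 - (n + 1 - j) = j by omega, show n + 1 - j = d by omega, hd, pow_add]
        have hsq : ((-1 : K) ^ j) ^ 2 = 1 := by rw [← pow_mul, mul_comm, pow_mul]; simp
        linear_combination (-(-1) ^ d * qBinom q (j + d) j * q ^ j.choose 2) * hsq
    _ = 0 := by rw [hvanish, mul_zero]

theorem sum_range_neg_one_pow_mul_qBinom_mul_qBinom (hq : ¬IsOfFinOrder q) {n j : ℕ}
    (hj : j ≤ n) :
    ∑ k ∈ range (n + 1), (-1) ^ k * qBinom q n k * q ^ (n - k).choose 2 * qBinom q k j =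
      if j = n then (-1) ^ n else 0 := by
  obtain ⟨c, rfl⟩ : ∃ c, n = j + c := ⟨n - j, by omega⟩
  rw [show j + c + 1 = j + (c + 1) by omega, sum_range_add,
    sum_eq_zero fun k hk => by rw [qBinom_of_lt q (mem_range.1 hk), mul_zero], zero_add]
  calc _ = (-1) ^ j * qBinom q (j + c) j *
        ∑ m ∈ range (c + 1), (-1) ^ m * qBinom q c m * q ^ (c - m).choose 2 := by
        rw [mul_sum]
        refine sum_congr rfl fun m _ => ?_
        have hmul := qBinom_add_mul hq (j + c) j m
        rw [Nat.add_sub_cancel_left] at hmul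
        rw [show j + c - (j + m) = c - m by omega, pow_add]
        linear_combination ((-1) ^ j * (-1) ^ m * q ^ (c - m).choose 2) * hmul
    _ = _ := by
        rw [sum_range_neg_one_pow_mul_qBinom_mul_pow hq]
        rcases Nat.eq_zero_or_pos c with rfl | hc
        · simp [qBinom_self hq]
        · rw [if_neg hc.ne', if_neg (by omega), mul_zero]

theorem sum_range_qTerm (hq : ¬IsOfFinOrder q) (n : ℕ) :
    ∑ k ∈ range (n + 1), qTerm q n k = (-1) ^ n * q ^ (n + 1).choose 2 := by
  calc _ = ∑ k ∈ range (n + 1), ∑ j ∈ range (n + 1), q ^ (j.choose 2 + j) *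
        ((-1) ^ k * qBinom q n k * q ^ (n - k).choose 2 * qBinom q k j) := by
        refine sum_congr rfl fun k hk => ?_
        rw [qTerm, prod_Icc_one_add_pow_eq_sum_qBinom hq,
          ← sum_range_qBinom_mul_of_lt q (mem_range.1 hk), mul_sum, mul_sum]
        exact sum_congr rfl fun j _ => by ring
    _ = ∑ j ∈ range (n + 1), q ^ (j.choose 2 + j) * if j = n then (-1) ^ n else 0 := by
        rw [sum_comm]
        refine sum_congr rfl fun j hj => ?_
        rw [← mul_sum, sum_range_neg_one_pow_mul_qBinom_mul_qBinom hq (mem_range_succ_iff.1 hj)]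
    _ = _ := by simp [choose_two_add_one, mul_comm]

theorem qTerm_succ_div_qInt (hq : ¬IsOfFinOrder q) (n k : ℕ) :
    qTerm q (n + 1) (k + 1) / qInt q (k + 1) =
      q ^ n * (qTerm q n (k + 1) / qInt q (k + 1)) +
        qTerm q (n + 1) (k + 1) / qInt q (n + 1) := by
  have habsorb : qBinom q n k / qInt q (k + 1) = qBinom q (n + 1) (k + 1) / qInt q (n + 1) := by
    rw [div_eq_div_iff (qInt_ne_zero hq k.succ_pos) (qInt_ne_zero hq n.succ_pos), mul_comm,
      qInt_succ_mul_qBinom hq, mul_comm]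
  have hshift : q ^ (k + 1) * qBinom q n (k + 1) * q ^ (n - k).choose 2 =
      q ^ n * (qBinom q n (k + 1) * q ^ (n - (k + 1)).choose 2) := by
    rcases le_or_gt (k + 1) n with h | h
    · obtain ⟨b, rfl⟩ : ∃ b, n = k + 1 + b := ⟨n - (k + 1), by omega⟩
      rw [show k + 1 + b - k = b + 1 by omega, Nat.add_sub_cancel_left, choose_two_add_one]
      ring
    · rw [qBinom_of_lt q h, mul_zero, zero_mul, zero_mul, mul_zero]
  simp only [qTerm, Nat.add_sub_add_right]
  set P := ∏ i ∈ Icc 1 (k + 1), (1 + q ^ i)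
  calc _ = (-1) ^ (k + 1) * q ^ (n - k).choose 2 * P * (qBinom q n k / qInt q (k + 1)) +
        (-1) ^ (k + 1) * (q ^ (k + 1) * qBinom q n (k + 1) * q ^ (n - k).choose 2) * P /
          qInt q (k + 1) := by
        rw [qBinom_succ_succ hq]
        ring
    _ = _ := by
        rw [habsorb, hshift]
        ring

theorem sum_Icc_qTerm_div_qInt (hq : ¬IsOfFinOrder q) (n : ℕ) :
    ∑ k ∈ Icc 1 n, qTerm q n k / qInt q k =
      q ^ n.choose 2 * ∑ k ∈ Icc 1 n, ((-q) ^ k - 1) / qInt q k := by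
  induction n with
  | zero => simp
  | succ n ih =>
    have hsplit : ∑ k ∈ Icc 1 (n + 1), qTerm q (n + 1) k / qInt q k =
        q ^ n * ∑ k ∈ Icc 1 (n + 1), qTerm q n k / qInt q k +
          (∑ k ∈ Icc 1 (n + 1), qTerm q (n + 1) k) / qInt q (n + 1) := by
      rw [mul_sum, sum_div, ← sum_add_distrib]
      refine sum_congr rfl fun k hk => ?_
      obtain ⟨k, rfl⟩ : ∃ k', k = k' + 1 := ⟨k - 1, by have := (mem_Icc.1 hk).1; omega⟩
      exact qTerm_succ_div_qInt hq n k
    have htop : qTerm q n (n + 1) = 0 := by simp [qTerm, qBinom_of_lt q n.lt_succ_self]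
    have hfull : ∑ k ∈ Icc 1 (n + 1), qTerm q (n + 1) k =
        (-1) ^ (n + 1) * q ^ (n + 2).choose 2 - q ^ (n + 1).choose 2 := by
      have hzero : qTerm q (n + 1) 0 = q ^ (n + 1).choose 2 := by
        simp [qTerm, qBinom_zero_right hq]
      have hrange := sum_range_qTerm hq (n + 1)
      rw [range_eq_Ico, sum_eq_sum_Ico_succ_bot (by omega), zero_add, Ico_add_one_right_eq_Icc,
        hzero] at hrange
      linear_combination hrange
    rw [hsplit, hfull, sum_Icc_succ_top (by omega : 1 ≤ n + 1), htop, zero_div, add_zero, ih,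
      sum_Icc_succ_top (by omega : 1 ≤ n + 1), choose_two_add_one (n + 1),
      choose_two_add_one n, neg_pow]
    field_simp
    ring

end QAnalogs

theorem not_isOfFinOrder_Φ_X : ¬IsOfFinOrder (Φ X) := by
  rw [isOfFinOrder_iff_pow_eq_one]
  rintro ⟨m, hm, h⟩
  rw [← map_pow, ← map_one Φ] at h
  have := congrArg natDegree (RatFunc.algebraMap_injective ℚ h)
  simp only [natDegree_pow, natDegree_X, mul_one, natDegree_one] at this
  omega

theorem q_gauss_sum_identity_general (n : ℕ) :
    ∑ k ∈ Finset.Icc 1 n,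
      (-1)^k
        * (Φ (∏ j ∈ Finset.Icc 1 n, (1 - X^j))
            / (Φ (∏ j ∈ Finset.Icc 1 k, (1 - X^j))
                * Φ (∏ j ∈ Finset.Icc 1 (n-k), (1 - X^j))))
        * Φ (X^(Nat.choose (n-k) 2) * ∏ i ∈ Finset.Icc 1 k, (1 + X^i))
        / Φ (qnum k)
    = Φ (X^(Nat.choose n 2))
        * ∑ k ∈ Finset.Icc 1 n, ((-Φ X)^k - 1) / Φ (qnum k) := by
  have hqnum (k : ℕ) : Φ (qnum k) = qInt (Φ X) k := by simp [qnum, qInt]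
  simp only [map_prod, map_mul, map_sub, map_add, map_pow, map_one, hqnum]
  rw [← sum_Icc_qTerm_div_qInt not_isOfFinOrder_Φ_X n]
  refine sum_congr rfl fun k hk => ?_
  rw [qTerm, qBinom_of_le _ (mem_Icc.1 hk).2, qPochhammer, qPochhammer, qPochhammer]

/-- The identity
`∑_{k=1}^n (-1)^k C(n,k)_q q^(C(n-k,2)) (-q;q)_k/[k]_q
  = q^(C(n,2)) ∑_{k=1}^n ((-q)^k - 1)/[k]_q`
in the field of rational functions `ℚ(q)`, where the Gaussian binomial coefficient is
`C(n,k)_q = (q;q)_n/((q;q)_k (q;q)_{n-k})`. -/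
theorem q_gauss_sum_identity (n : ℕ) (hn : 0 < n) :
    ∑ k ∈ Finset.Icc 1 n,
      (-1)^k
        * (Φ (∏ j ∈ Finset.Icc 1 n, (1 - X^j))
            / (Φ (∏ j ∈ Finset.Icc 1 k, (1 - X^j))
                * Φ (∏ j ∈ Finset.Icc 1 (n-k), (1 - X^j))))
        * Φ (X^(Nat.choose (n-k) 2) * ∏ i ∈ Finset.Icc 1 k, (1 + X^i))
        / Φ (qnum k)
    = Φ (X^(Nat.choose n 2))
        * ∑ k ∈ Finset.Icc 1 n, ((-Φ X)^k - 1) / Φ (qnum k) :=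
  q_gauss_sum_identity_general n
end
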